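/- arXiv:1606.06838 — 2 statements merged into one kernel-verified Lean document; each statement's English description precedes it below -/
import Mathlib

section
/- Let M = [m_{ij}] be an n×n complex Nekrasov matrix whose diagonal entries m_{ii} are real and positive, let D = diag(d_1,…,d_n) with 0 ≤ d_i ≤ 1 for all i, and set M̃ = I − D + DM = [m̃_{ij}]. Then for every i = 1,…,n one has h_i(M̃)/m̃_{ii} ≤ h_i(M)/m_{ii}. -/
open Finset

noncomputable def nekH {n : ℕ} {𝕜 : Type*} [RCLike 𝕜] (A : Matrix (Fin n) (Fin n) 𝕜) : Fin n → ℝ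
  | i =>
    (∑ j : Fin n, if h : j < i then ‖A i j‖ / ‖A j j‖ * nekH A j else 0)
      + ∑ j : Fin n, if i < j then ‖A i j‖ else 0
termination_by i => i.val
decreasing_by exact h

def IsNekrasov {n : ℕ} {𝕜 : Type*} [RCLike 𝕜] (A : Matrix (Fin n) (Fin n) 𝕜) : Prop :=
  ∀ i, nekH A i < ‖A i i‖

noncomputable def nekZ {n : ℕ} {𝕜 : Type*} [RCLike 𝕜] (A : Matrix (Fin n) (Fin n) 𝕜) : Fin n → ℝ
  | i => (∑ j : Fin n, if h : j < i then ‖A i j‖ / ‖A j j‖ * nekZ A j else 0) + 1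
termination_by i => i.val
decreasing_by exact h

noncomputable def nekEta {n : ℕ} {𝕜 : Type*} [RCLike 𝕜] (M : Matrix (Fin n) (Fin n) 𝕜) : Fin n → ℝ
  | i => (∑ j : Fin n, if h : j < i then ‖M i j‖ / min ‖M j j‖ 1 * nekEta M j else 0) + 1
termination_by i => i.val
decreasing_by exact h

noncomputable def linftyNorm {n : ℕ} {𝕜 : Type*} [RCLike 𝕜] (A : Matrix (Fin n) (Fin n) 𝕜) : ℝ :=
  ⨆ i, ∑ j, ‖A i j‖

noncomputable def rPlus {n : ℕ} (M : Matrix (Fin n) (Fin n) ℝ) (i : Fin n) : ℝ :=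
  Finset.fold max 0 (fun j => M i j) (Finset.univ.erase i)

noncomputable def BPlus {n : ℕ} (M : Matrix (Fin n) (Fin n) ℝ) : Matrix (Fin n) (Fin n) ℝ :=
  Matrix.of fun i j => M i j - rPlus M i

def IsBNekrasov {n : ℕ} (M : Matrix (Fin n) (Fin n) ℝ) : Prop :=
  IsNekrasov (BPlus M) ∧ ∀ i, 0 < BPlus M i i

def IsLCPSolution {n : ℕ} (M : Matrix (Fin n) (Fin n) ℝ) (q x : Fin n → ℝ) : Prop :=
  (∀ i, 0 ≤ x i) ∧ (∀ i, 0 ≤ (M.mulVec x + q) i) ∧ ∑ i, (M.mulVec x + q) i * x i = 0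

def IsPMatrix {n : ℕ} (M : Matrix (Fin n) (Fin n) ℝ) : Prop :=
  ∀ S : Finset (Fin n), 0 < (M.submatrix (fun i : S => (i : Fin n)) (fun j : S => (j : Fin n))).det


lemma nekH_nonneg' {n} (A : Matrix (Fin n) (Fin n) ℂ) : ∀ i, 0 ≤ nekH A i := by
  have H : ∀ m : ℕ, ∀ i : Fin n, (i : ℕ) ≤ m → 0 ≤ nekH A i := by
    intro m
    induction m using Nat.strong_induction_on with
    | _ m ih =>
      intro i him
      rw [nekH]
      apply add_nonneg <;> apply Finset.sum_nonneg <;> intro j _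
      · split
        · next h =>
          have hj : (j : ℕ) < m := lt_of_lt_of_le h him
          exact mul_nonneg (div_nonneg (norm_nonneg _) (norm_nonneg _)) (ih _ hj j le_rfl)
        · exact le_rfl
      · positivity
  exact fun i => H i i le_rfl

theorem stmt0 {n : ℕ} (M : Matrix (Fin n) (Fin n) ℂ)
    (hdiag : ∀ i, (M i i).im = 0 ∧ 0 < (M i i).re)
    (hNek : IsNekrasov M)
    (d : Fin n → ℝ) (hd : ∀ i, 0 ≤ d i ∧ d i ≤ 1) (i : Fin n) :
    nekH (1 - Matrix.diagonal (fun k => (d k : ℂ)) + Matrix.diagonal (fun k => (d k : ℂ)) * M) i / ((1 - Matrix.diagonal (fun k => (d k : ℂ)) + Matrix.diagonal (fun k => (d k : ℂ)) * M) i i).re ≤ nekH M i / (M i i).re := by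
  set Mt := 1 - Matrix.diagonal (fun k => (d k : ℂ)) + Matrix.diagonal (fun k => (d k : ℂ)) * M with hMt
  have hoff : ∀ i j : Fin n, i ≠ j → ‖Mt i j‖ = d i * ‖M i j‖ := by
    intro i j hij
    simp [hMt, Matrix.add_apply, Matrix.sub_apply, Matrix.one_apply_ne hij,
      Matrix.diagonal_apply_ne _ hij, Matrix.diagonal_mul, norm_mul,
      Complex.norm_real, Real.norm_eq_abs, abs_of_nonneg (hd i).1]
  have hMtd : ∀ i : Fin n, Mt i i = ((1 - d i + d i * (M i i).re : ℝ) : ℂ) := by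
    intro i
    have hMii : M i i = ((M i i).re : ℂ) := Complex.ext rfl (by simp [(hdiag i).1])
    have h1 : Mt i i = 1 - (d i : ℂ) + (d i : ℂ) * M i i := by
      simp [hMt, Matrix.add_apply, Matrix.sub_apply, Matrix.one_apply_eq,
        Matrix.diagonal_apply_eq, Matrix.diagonal_mul]
    rw [h1]
    conv_lhs => rw [hMii]
    push_cast
    ring
  have hden : ∀ i : Fin n, 0 < 1 - d i + d i * (M i i).re := by
    intro i
    rcases le_or_gt (M i i).re 1 with h | h
    · nlinarith [(hdiag i).2, mul_nonneg (sub_nonneg.mpr (hd i).2) (sub_nonneg.mpr h)]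
    · nlinarith [mul_nonneg (hd i).1 (sub_pos.mpr h).le]
  have hMtnorm : ∀ i : Fin n, ‖Mt i i‖ = 1 - d i + d i * (M i i).re := by
    intro i; rw [hMtd i, Complex.norm_real, Real.norm_eq_abs, abs_of_pos (hden i)]
  have hMtre : ∀ i : Fin n, (Mt i i).re = 1 - d i + d i * (M i i).re := by
    intro i; rw [hMtd i, Complex.ofReal_re]
  have hMnorm : ∀ i : Fin n, ‖M i i‖ = (M i i).re := by
    intro i
    have hMii : M i i = ((M i i).re : ℂ) := Complex.ext rfl (by simp [(hdiag i).1])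
    conv_lhs => rw [hMii]
    rw [Complex.norm_real, Real.norm_eq_abs, abs_of_pos (hdiag i).2]
  have main : ∀ m : ℕ, ∀ i : Fin n, (i : ℕ) ≤ m →
      nekH Mt i / ‖Mt i i‖ ≤ nekH M i / ‖M i i‖ := by
    intro m
    induction m using Nat.strong_induction_on with
    | _ m ihm =>
      intro i him
      have key : nekH Mt i ≤ d i * nekH M i := by
        conv_lhs => rw [nekH]
        conv_rhs => rw [nekH]
        rw [mul_add, Finset.mul_sum, Finset.mul_sum]
        gcongr with j _ j _
        · split
          · next h =>
            have hij : i ≠ j := fun e => absurd h (e ▸ lt_irrefl _)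
            have ihj := ihm _ (lt_of_lt_of_le (show (j:ℕ) < (i:ℕ) from h) him) j le_rfl
            calc ‖Mt i j‖ / ‖Mt j j‖ * nekH Mt j
                = d i * ‖M i j‖ * (nekH Mt j / ‖Mt j j‖) := by
                  rw [hoff i j hij]; ring
              _ ≤ d i * ‖M i j‖ * (nekH M j / ‖M j j‖) :=
                  mul_le_mul_of_nonneg_left ihj
                    (mul_nonneg (hd i).1 (norm_nonneg _))
              _ = d i * (‖M i j‖ / ‖M j j‖ * nekH M j) := by ring
          · simp
        · split
          · next h =>
            exact le_of_eq (hoff i j (ne_of_lt h))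
          · simp
      have hMpos := (hdiag i).2
      have hh := nekH_nonneg' M i
      rw [hMtnorm, hMnorm, div_le_div_iff₀ (hden i) hMpos]
      nlinarith [(hd i).1, (hd i).2, mul_le_mul_of_nonneg_right key hMpos.le,
        mul_nonneg (mul_nonneg hh (sub_nonneg.mpr (hd i).2)) hMpos.le]
  have := main i i le_rfl
  rwa [hMtnorm, hMnorm, ← hMtre] at this
end

section
/- Let M = [m_{ij}] be an n×n complex Nekrasov matrix whose diagonal entries m_{ii} are real and positive, let D = diag(d_1,…,d_n) with 0 ≤ d_i ≤ 1 for all i, and set M̃ = I − D + DM = [m̃_{ij}]. Then for every i = 1,…,n one has z_i(M̃) ≤ η_i(M). -/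
open Finset

/-!
Both `z` and `η` are defined by the same lower-triangular recursion, so `z_i(A) ≤ η_i(M)` follows
by strong induction on `i` once `|a_{ij}| ≤ |m_{ij}|` below the diagonal and
`min {|m_{jj}|, 1} ≤ |a_{jj}|`. For `A = I - D + DM` the off-diagonal entries are `d_i m_{ij}`, and
the diagonal entries `1 - d_j + d_j m_{jj}` are convex combinations of `1` and the positive real
`m_{jj}`, hence at least `min {m_{jj}, 1}`.
-/

lemma nekZ_nonneg {n : ℕ} {𝕜 : Type*} [RCLike 𝕜] (A : Matrix (Fin n) (Fin n) 𝕜) (i : Fin n) :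
    0 ≤ nekZ A i := by
  rw [nekZ]
  have hsum : 0 ≤ ∑ j : Fin n, if h : j < i then ‖A i j‖ / ‖A j j‖ * nekZ A j else 0 := by
    refine Finset.sum_nonneg fun j _ => ?_
    split_ifs with h
    · have := nekZ_nonneg A j
      positivity
    · exact le_rfl
  linarith
termination_by i.val
decreasing_by assumption

theorem nekZ_le_nekEta {n : ℕ} {𝕜 𝕜' : Type*} [RCLike 𝕜] [RCLike 𝕜']
    (A : Matrix (Fin n) (Fin n) 𝕜) (M : Matrix (Fin n) (Fin n) 𝕜')
    (hlower : ∀ i j, j < i → ‖A i j‖ ≤ ‖M i j‖) (hM : ∀ j, M j j ≠ 0)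
    (hdiag : ∀ j, min ‖M j j‖ 1 ≤ ‖A j j‖) (i : Fin n) :
    nekZ A i ≤ nekEta M i := by
  rw [nekZ, nekEta]
  gcongr with j
  split_ifs with h
  · have hmin : 0 < min ‖M j j‖ 1 := lt_min (norm_pos_iff.mpr (hM j)) one_pos
    have := nekZ_nonneg A j
    have := nekZ_le_nekEta A M hlower hM hdiag j
    gcongr
    · exact hlower i j h
    · exact hdiag j
  · exact le_rfl
termination_by i.val
decreasing_by assumption

section ConvexCombination

variable {ι R : Type*} [Fintype ι] [DecidableEq ι] [Ring R] (d : ι → R) (M : Matrix ι ι R)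

lemma one_sub_diagonal_add_diagonal_mul_apply_of_ne {a b : ι} (hab : a ≠ b) :
    (1 - Matrix.diagonal d + Matrix.diagonal d * M) a b = d a * M a b := by
  simp [Matrix.one_apply_ne hab, Matrix.diagonal_apply_ne _ hab, Matrix.diagonal_mul]

lemma one_sub_diagonal_add_diagonal_mul_apply_self (a : ι) :
    (1 - Matrix.diagonal d + Matrix.diagonal d * M) a a = 1 - d a + d a * M a a := by
  simp [Matrix.diagonal_mul]

end ConvexCombination

section UnitInterval

variable {𝕜 : Type*} [RCLike 𝕜] {t : ℝ}

lemma norm_ofReal_mul_le (ht0 : 0 ≤ t) (ht1 : t ≤ 1) (x : 𝕜) : ‖(t : 𝕜) * x‖ ≤ ‖x‖ := by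
  rw [norm_mul, RCLike.norm_ofReal, abs_of_nonneg ht0]
  exact mul_le_of_le_one_left (norm_nonneg x) ht1

lemma min_norm_one_le_norm_one_sub_add_mul (ht0 : 0 ≤ t) (ht1 : t ≤ 1) {x : 𝕜}
    (him : RCLike.im x = 0) (hre : 0 ≤ RCLike.re x) :
    min ‖x‖ 1 ≤ ‖1 - (t : 𝕜) + t * x‖ := by
  obtain ⟨r, rfl⟩ : ∃ r : ℝ, (r : 𝕜) = x := ⟨RCLike.re x, RCLike.conj_eq_iff_re.mp
    (RCLike.conj_eq_iff_im.mpr him)⟩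
  rw [RCLike.ofReal_re] at hre
  calc min ‖(r : 𝕜)‖ 1 = min r 1 := by rw [RCLike.norm_ofReal, abs_of_nonneg hre]
    _ ≤ 1 - t + t * r := by nlinarith [min_le_left r 1, min_le_right r 1]
    _ ≤ ‖((1 - t + t * r : ℝ) : 𝕜)‖ := by rw [RCLike.norm_ofReal]; exact le_abs_self _
    _ = ‖1 - (t : 𝕜) + t * r‖ := by push_cast; rfl

end UnitInterval

theorem stmt4_general {n : ℕ} (M : Matrix (Fin n) (Fin n) ℂ)
    (hdiag : ∀ i, (M i i).im = 0 ∧ 0 < (M i i).re)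
    (d : Fin n → ℝ) (hd : ∀ i, 0 ≤ d i ∧ d i ≤ 1) (i : Fin n) :
    nekZ (1 - Matrix.diagonal (fun k => (d k : ℂ)) + Matrix.diagonal (fun k => (d k : ℂ)) * M) i ≤ nekEta M i := by
  refine nekZ_le_nekEta _ M (fun a b hba => ?_) (fun a => ?_) (fun a => ?_) i
  · rw [one_sub_diagonal_add_diagonal_mul_apply_of_ne _ _ hba.ne']
    exact norm_ofReal_mul_le (hd a).1 (hd a).2 (M a b)
  · exact fun h => (hdiag a).2.ne' (by simp [h])
  · rw [one_sub_diagonal_add_diagonal_mul_apply_self]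
    exact min_norm_one_le_norm_one_sub_add_mul (hd a).1 (hd a).2 (hdiag a).1 (hdiag a).2.le

theorem stmt4 {n : ℕ} (M : Matrix (Fin n) (Fin n) ℂ)
    (hdiag : ∀ i, (M i i).im = 0 ∧ 0 < (M i i).re)
    (hNek : IsNekrasov M)
    (d : Fin n → ℝ) (hd : ∀ i, 0 ≤ d i ∧ d i ≤ 1) (i : Fin n) :
    nekZ (1 - Matrix.diagonal (fun k => (d k : ℂ)) + Matrix.diagonal (fun k => (d k : ℂ)) * M) i ≤ nekEta M i :=
  stmt4_general M hdiag d hd i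
end
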